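/- The matrix CᵀD⁻¹C is invertible and D P^D_{𝒯^{⊥_D}} = C(CᵀD⁻¹C)⁻¹Cᵀ; consequently, for any I×L matrix Z whose (j,k)-th row z_{jk}ᵀ satisfies z_{j0} = 0 and z_{0k} = 0 for all j,k, one has Zᵀ D P^D_{𝒯^{⊥_D}} Z = Z°ᵀ(CᵀD⁻¹C)⁻¹Z°. -/

import Mathlib

open Matrix BigOperators

noncomputable section

/-- Cells `(j,k)` of a `(J+1) × (K+1)` contingency table. -/
abbrev Cell (J K : ℕ) := Fin (J + 1) × Fin (K + 1)

/-- Standard unit vector `e_{jk}` in `ℝ^I`. -/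
def eV {J K : ℕ} (c : Cell J K) : Cell J K → ℝ := Pi.single c 1

/-- Row-sum vector `e_{j+} = Σ_k e_{jk}`. -/
def eRow {J K : ℕ} (j : Fin (J + 1)) : Cell J K → ℝ := ∑ k : Fin (K + 1), eV (j, k)

/-- Column-sum vector `e_{+k} = Σ_j e_{jk}`. -/
def eCol {J K : ℕ} (k : Fin (K + 1)) : Cell J K → ℝ := ∑ j : Fin (J + 1), eV (j, k)

/-- The all-ones vector `e_{++}`. -/
def eAll (J K : ℕ) : Cell J K → ℝ := ∑ j : Fin (J + 1), ∑ k : Fin (K + 1), eV (j, k)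

/-- The row space `ℛ = span{e_{0+},…,e_{J+}}`. -/
def rowSpace (J K : ℕ) : Submodule ℝ (Cell J K → ℝ) :=
  Submodule.span ℝ (Set.range (eRow (J := J) (K := K)))

/-- The column space `𝒞 = span{e_{+0},…,e_{+K}}`. -/
def colSpace (J K : ℕ) : Submodule ℝ (Cell J K → ℝ) :=
  Submodule.span ℝ (Set.range (eCol (J := J) (K := K)))

/-- The diagonal space `𝒟 = span{e_{++}}`. -/
def diagSpace (J K : ℕ) : Submodule ℝ (Cell J K → ℝ) :=
  Submodule.span ℝ {eAll J K}

/-- The marginal space `𝒯 = ℛ + 𝒞`. -/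
def margSpace (J K : ℕ) : Submodule ℝ (Cell J K → ℝ) := rowSpace J K ⊔ colSpace J K

/-- `P` is the `D`-orthogonal projection matrix onto the subspace `S`:
`P x ∈ S` and `x - P x` is `D`-orthogonal to `S`, for every `x`. -/
def IsProjD {J K : ℕ} (D : Matrix (Cell J K) (Cell J K) ℝ) (S : Submodule ℝ (Cell J K → ℝ))
    (P : Matrix (Cell J K) (Cell J K) ℝ) : Prop :=
  ∀ x, P.mulVec x ∈ S ∧ ∀ s ∈ S, (x - P.mulVec x) ⬝ᵥ D.mulVec s = 0

/-- The `D`-orthogonal complement of a subspace `S`. -/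
def perpD {J K : ℕ} (D : Matrix (Cell J K) (Cell J K) ℝ) (S : Submodule ℝ (Cell J K → ℝ)) :
    Submodule ℝ (Cell J K → ℝ) where
  carrier := {x | ∀ t ∈ S, x ⬝ᵥ D.mulVec t = 0}
  add_mem' := by
    intro a b ha hb t ht
    simp only [Set.mem_setOf_eq] at *
    simp [add_dotProduct, ha t ht, hb t ht]
  zero_mem' := by
    intro t ht
    simp
  smul_mem' := by
    intro c a ha t ht
    simp only [Set.mem_setOf_eq] at *
    simp [smul_dotProduct, ha t ht]

/-- The vector `c_{jk} = e_{jk} + e_{00} - e_{j0} - e_{0k}` (for `1 ≤ j`, `1 ≤ k`). -/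
def cVec {J K : ℕ} (j : Fin J) (k : Fin K) : Cell J K → ℝ :=
  eV (j.succ, k.succ) + eV (0, 0) - eV (j.succ, 0) - eV (0, k.succ)

/-- The `I × (JK)` matrix `C` with columns `c_{jk}`. -/
def Cmat (J K : ℕ) : Matrix (Cell J K) (Fin J × Fin K) ℝ :=
  fun i jk => cVec jk.1 jk.2 i

/-- The vector `b_k = e_{0k} - e_{00}` (for `1 ≤ k`). -/
def bVec {J K : ℕ} (k : Fin K) : Cell J K → ℝ :=
  eV ((0 : Fin (J + 1)), k.succ) - eV (0, 0)

/-- The `I × K` matrix `B` with columns `b_k`. -/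
def Bmat (J K : ℕ) : Matrix (Cell J K) (Fin K) ℝ :=
  fun i k => bVec k i

/-- The `I × K` matrix `E` with columns `e_{+1},…,e_{+K}`. -/
def Emat (J K : ℕ) : Matrix (Cell J K) (Fin K) ℝ :=
  fun i k => eCol k.succ i

/-- Column space of a matrix. -/
def colSpan {m n : Type*} [Fintype n] (A : Matrix m n ℝ) : Submodule ℝ (m → ℝ) :=
  Submodule.span ℝ (Set.range fun j => fun i => A i j)

/-- The reduced `(JK) × L` covariate matrix `Z°` with rows `z_{jk}ᵀ`, `j,k ≥ 1`. -/
def Zred {J K : ℕ} {L : Type*} (Z : Matrix (Cell J K) L ℝ) : Matrix (Fin J × Fin K) L ℝ :=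
  fun jk => Z (jk.1.succ, jk.2.succ)

/-- The model space `ℋ = 𝒯 + col(Z)` of the log-linear model
`η_{jk} = α + ρ_j + γ_k + z_{jk}ᵀ θ`. -/
def modelSpace {J K : ℕ} {L : Type*} [Fintype L] (Z : Matrix (Cell J K) L ℝ) :
    Submodule ℝ (Cell J K → ℝ) :=
  margSpace J K ⊔ colSpan Z

end

/-! `CᵀD⁻¹C` is positive definite because `C` is injective: `C w` reproduces `w` on the cells
`(j,k)` with `j,k ≥ 1`. The key fact is that the range of `C` is the Euclidean orthogonal
complement of `𝒯`, since a table with vanishing row and column sums is determined by those cells.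
As `D` maps `𝒯^{⊥_D}` onto that complement, `D⁻¹C(CᵀD⁻¹C)⁻¹Cᵀ` satisfies the defining property of
the `D`-projection onto `𝒯^{⊥_D}`, which is unique because `D` is positive definite. Finally
`CᵀZ = Z°` once the rows `z_{j0}` and `z_{0k}` vanish. -/

section Projection

variable {J K : ℕ} {D : Matrix (Cell J K) (Cell J K) ℝ} {S : Submodule ℝ (Cell J K → ℝ)}

theorem IsProjD.unique (hD : D.PosDef) {P₁ P₂ : Matrix (Cell J K) (Cell J K) ℝ}
    (h₁ : IsProjD D S P₁) (h₂ : IsProjD D S P₂) : P₁ = P₂ := by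
  refine ext_iff_mulVec.mpr fun x => ?_
  set d := P₁ *ᵥ x - P₂ *ᵥ x
  have hd : d ∈ S := S.sub_mem (h₁ x).1 (h₂ x).1
  have hquad : star d ⬝ᵥ D *ᵥ d = 0 := by
    have h := congrArg₂ (· - ·) ((h₂ x).2 d hd) ((h₁ x).2 d hd)
    simpa [d, ← sub_dotProduct] using h
  by_contra hne
  exact (hD.dotProduct_mulVec_pos (sub_ne_zero.mpr hne)).ne' hquad

theorem inv_mulVec_dotProduct_mulVec (hDsymm : Dᵀ = D) (hD : IsUnit D) (u t : Cell J K → ℝ) :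
    (D⁻¹ *ᵥ u) ⬝ᵥ (D *ᵥ t) = u ⬝ᵥ t := by
  rw [dotProduct_comm, dotProduct_mulVec, ← vecMul_transpose, hDsymm, vecMul_vecMul,
    mul_nonsing_inv _ ((isUnit_iff_isUnit_det D).mp hD), vecMul_one, dotProduct_comm]

theorem isProjD_perpD_of_range_eq_orthogonal {ι : Type*} [Fintype ι] [DecidableEq ι]
    (hDsymm : Dᵀ = D) (hD : IsUnit D) {C : Matrix (Cell J K) ι ℝ} (hM : IsUnit (Cᵀ * D⁻¹ * C))
    (hCS : ∀ t ∈ S, t ᵥ* C = 0) (hrange : ∀ v, (∀ t ∈ S, v ⬝ᵥ t = 0) → ∃ w, C *ᵥ w = v) :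
    IsProjD D (perpD D S) (D⁻¹ * C * (Cᵀ * D⁻¹ * C)⁻¹ * Cᵀ) := by
  have hCQ : Cᵀ * (D⁻¹ * C * (Cᵀ * D⁻¹ * C)⁻¹ * Cᵀ) = Cᵀ := by
    simp only [← Matrix.mul_assoc, mul_nonsing_inv _ ((isUnit_iff_isUnit_det _).mp hM),
      Matrix.one_mul]
  refine fun x => ⟨fun t ht => ?_, fun s hs => ?_⟩
  · simp only [← mulVec_mulVec]
    rw [inv_mulVec_dotProduct_mulVec hDsymm hD, dotProduct_comm, dotProduct_mulVec, hCS t ht,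
      zero_dotProduct]
  · obtain ⟨w, hw⟩ := hrange (D *ᵥ s) fun t ht => by
      rw [← vecMul_transpose, hDsymm, ← dotProduct_mulVec]
      exact hs t ht
    rw [← hw, dotProduct_mulVec, ← mulVec_transpose, mulVec_sub, mulVec_mulVec, hCQ, sub_self,
      zero_dotProduct]

end Projection

section Table

variable {J K : ℕ}

theorem dotProduct_cVec (t : Cell J K → ℝ) (j : Fin J) (k : Fin K) :
    t ⬝ᵥ cVec j k = t (j.succ, k.succ) + t (0, 0) - t (j.succ, 0) - t (0, k.succ) := by
  simp [cVec, eV, dotProduct_add, dotProduct_sub, dotProduct_single]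

theorem eRow_apply (i a : Fin (J + 1)) (b : Fin (K + 1)) :
    eRow i (a, b) = if a = i then 1 else 0 := by
  simp [eRow, eV, Pi.single_apply, Prod.ext_iff, ite_and]

theorem eCol_apply (i b : Fin (K + 1)) (a : Fin (J + 1)) :
    eCol i (a, b) = if b = i then 1 else 0 := by
  simp [eCol, eV, Pi.single_apply, Prod.ext_iff, ite_and]

theorem dotProduct_eRow (t : Cell J K → ℝ) (j : Fin (J + 1)) :
    t ⬝ᵥ eRow j = ∑ k, t (j, k) := by
  simp [eRow, eV, dotProduct_sum, dotProduct_single]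

theorem dotProduct_eCol (t : Cell J K → ℝ) (k : Fin (K + 1)) :
    t ⬝ᵥ eCol k = ∑ j, t (j, k) := by
  simp [eCol, eV, dotProduct_sum, dotProduct_single]

theorem vecMul_Cmat_of_mem_margSpace {t : Cell J K → ℝ} (ht : t ∈ margSpace J K) :
    t ᵥ* Cmat J K = 0 := by
  suffices margSpace J K ≤ LinearMap.ker (vecMulLinear (Cmat J K)) from this ht
  refine sup_le (Submodule.span_le.mpr ?_) (Submodule.span_le.mpr ?_) <;>
    rintro _ ⟨i, rfl⟩ <;> ext ⟨j, k⟩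
  · change eRow i ⬝ᵥ cVec j k = 0
    simp only [dotProduct_cVec, eRow_apply]
    ring
  · change eCol i ⬝ᵥ cVec j k = 0
    simp only [dotProduct_cVec, eCol_apply]
    ring

theorem Cmat_mulVec_apply_succ_succ (w : Fin J × Fin K → ℝ) (j : Fin J) (k : Fin K) :
    (Cmat J K *ᵥ w) (j.succ, k.succ) = w (j, k) := by
  simp [mulVec, dotProduct, Cmat, cVec, eV, Pi.single_apply, Fintype.sum_prod_type, ite_and]

theorem Cmat_mulVec_injective : Function.Injective (Cmat J K).mulVec := fun w w' h =>
  funext fun c => by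
    simpa only [Cmat_mulVec_apply_succ_succ] using congrFun h (c.1.succ, c.2.succ)

theorem eq_zero_of_orthogonal_margSpace {u : Cell J K → ℝ}
    (hu : ∀ t ∈ margSpace J K, u ⬝ᵥ t = 0) (hin : ∀ j k, u (Fin.succ j, Fin.succ k) = 0) :
    u = 0 := by
  have hrow (j) : ∑ k, u (j, k) = 0 := by
    rw [← dotProduct_eRow]
    exact hu _ (Submodule.mem_sup_left (Submodule.subset_span ⟨j, rfl⟩))
  have hcol (k) : ∑ j, u (j, k) = 0 := by
    rw [← dotProduct_eCol]
    exact hu _ (Submodule.mem_sup_right (Submodule.subset_span ⟨k, rfl⟩))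
  have hj0 (j : Fin J) : u (j.succ, 0) = 0 := by
    simpa [Fin.sum_univ_succ, hin] using hrow j.succ
  have h0k (k : Fin K) : u (0, k.succ) = 0 := by
    simpa [Fin.sum_univ_succ, hin] using hcol k.succ
  have h00 : u (0, 0) = 0 := by
    simpa [Fin.sum_univ_succ, h0k] using hrow 0
  ext ⟨j, k⟩
  cases j using Fin.cases <;> cases k using Fin.cases <;> simp [*]

theorem exists_Cmat_mulVec_eq {v : Cell J K → ℝ} (hv : ∀ t ∈ margSpace J K, v ⬝ᵥ t = 0) :
    ∃ w, Cmat J K *ᵥ w = v := by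
  refine ⟨fun c => v (c.1.succ, c.2.succ), (sub_eq_zero.mp ?_).symm⟩
  refine eq_zero_of_orthogonal_margSpace (fun t ht => ?_) fun j k => ?_
  · rw [sub_dotProduct, hv t ht, dotProduct_comm, dotProduct_mulVec,
      vecMul_Cmat_of_mem_margSpace ht, zero_dotProduct, sub_zero]
  · rw [Pi.sub_apply, Cmat_mulVec_apply_succ_succ, sub_self]

theorem Cmat_transpose_mul_eq_Zred {L : Type*} {Z : Matrix (Cell J K) L ℝ}
    (hrow : ∀ j, Z (j, 0) = 0) (hcol : ∀ k, Z (0, k) = 0) : (Cmat J K)ᵀ * Z = Zred Z := by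
  ext ⟨j, k⟩ l
  have h := dotProduct_cVec (fun i => Z i l) j k
  simp only [hrow, hcol, Pi.zero_apply, add_zero, sub_zero] at h
  simp only [mul_apply, transpose_apply, Cmat, Zred]
  rw [← h, dotProduct_comm]
  rfl

end Table

theorem D_proj_marg_perp_representation_general
    {J K : ℕ}
    (μ : Cell J K → ℝ) (hμ : ∀ i, 0 < μ i)
    (PTperp : Matrix (Cell J K) (Cell J K) ℝ)
    (hPTperp : IsProjD (Matrix.diagonal μ) (perpD (Matrix.diagonal μ) (margSpace J K)) PTperp) :
    IsUnit ((Cmat J K)ᵀ * (Matrix.diagonal μ)⁻¹ * Cmat J K) ∧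
    Matrix.diagonal μ * PTperp =
      Cmat J K * ((Cmat J K)ᵀ * (Matrix.diagonal μ)⁻¹ * Cmat J K)⁻¹ * (Cmat J K)ᵀ ∧
    ∀ (L : ℕ) (Z : Matrix (Cell J K) (Fin L) ℝ),
      (∀ j, Z (j, 0) = 0) → (∀ k, Z (0, k) = 0) →
      Zᵀ * (Matrix.diagonal μ * PTperp) * Z =
        (Zred Z)ᵀ * ((Cmat J K)ᵀ * (Matrix.diagonal μ)⁻¹ * Cmat J K)⁻¹ * Zred Z := by
  have hD : (diagonal μ).PosDef := .diagonal hμ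
  have hM : ((Cmat J K)ᵀ * (diagonal μ)⁻¹ * Cmat J K).PosDef := by
    simpa [conjTranspose_eq_transpose_of_trivial] using
      hD.inv.conjTranspose_mul_mul_same Cmat_mulVec_injective
  have hP := hPTperp.unique hD <| isProjD_perpD_of_range_eq_orthogonal (diagonal_transpose μ)
    hD.isUnit hM.isUnit (fun _ => vecMul_Cmat_of_mem_margSpace) fun _ => exists_Cmat_mulVec_eq
  have hDP : diagonal μ * PTperp =
      Cmat J K * ((Cmat J K)ᵀ * (diagonal μ)⁻¹ * Cmat J K)⁻¹ * (Cmat J K)ᵀ := by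
    rw [hP]
    simp only [← Matrix.mul_assoc, mul_nonsing_inv _ ((isUnit_iff_isUnit_det _).mp hD.isUnit),
      Matrix.one_mul]
  refine ⟨hM.isUnit, hDP, fun L Z hrow hcol => ?_⟩
  rw [hDP, ← Cmat_transpose_mul_eq_Zred hrow hcol, transpose_mul, transpose_transpose]
  simp only [Matrix.mul_assoc]

/-- `CᵀD⁻¹C` is invertible and `D P^D_{𝒯^{⊥_D}} = C(CᵀD⁻¹C)⁻¹Cᵀ`;
consequently, for any `I×L` matrix `Z` with vanishing rows `z_{j0}` and `z_{0k}`,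
`Zᵀ D P^D_{𝒯^{⊥_D}} Z = Z°ᵀ(CᵀD⁻¹C)⁻¹Z°`. -/
theorem D_proj_marg_perp_representation
    {J K : ℕ} (hJ : 1 ≤ J) (hK : 1 ≤ K)
    (μ : Cell J K → ℝ) (hμ : ∀ i, 0 < μ i)
    (PTperp : Matrix (Cell J K) (Cell J K) ℝ)
    (hPTperp : IsProjD (Matrix.diagonal μ) (perpD (Matrix.diagonal μ) (margSpace J K)) PTperp) :
    IsUnit ((Cmat J K)ᵀ * (Matrix.diagonal μ)⁻¹ * Cmat J K) ∧
    Matrix.diagonal μ * PTperp =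
      Cmat J K * ((Cmat J K)ᵀ * (Matrix.diagonal μ)⁻¹ * Cmat J K)⁻¹ * (Cmat J K)ᵀ ∧
    ∀ (L : ℕ) (Z : Matrix (Cell J K) (Fin L) ℝ),
      (∀ j, Z (j, 0) = 0) → (∀ k, Z (0, k) = 0) →
      Zᵀ * (Matrix.diagonal μ * PTperp) * Z =
        (Zred Z)ᵀ * ((Cmat J K)ᵀ * (Matrix.diagonal μ)⁻¹ * Cmat J K)⁻¹ * Zred Z :=
  D_proj_marg_perp_representation_general μ hμ PTperp hPTperp
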